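/- Let k be a field of characteristic zero and n an integer with n ≥ 2. Let P = MvPolynomial (Fin 3) k with Poisson bracket ⁅p,q⁆_P = u₁·(∂₀p·∂₂q − ∂₂p·∂₀q) + u₂·(∂₁p·∂₂q − ∂₂p·∂₁q) (so ⁅u₁,u₂⁆ = 0, ⁅u₂,u₃⁆ = u₂, ⁅u₁,u₃⁆ = u₁), and let Q = MvPolynomial (Fin 3) k with Poisson bracket ⁅p,q⁆_Q = n·v₁·(∂₀p·∂₂q − ∂₂p·∂₀q) + v₂·(∂₁p·∂₂q − ∂₂p·∂₁q) (so ⁅v₁,v₂⁆ = 0, ⁅v₂,v₃⁆ = v₂, ⁅v₁,v₃⁆ = n·v₁). Then there is no Poisson isomorphism between P and Q; that is, the invariant ring P^T of the linear Taft action is not isomorphic to P as a Poisson algebra. -/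

import Mathlib

open MvPolynomial

noncomputable def linBracket {k : Type*} [Field k]
    (p q : MvPolynomial (Fin 3) k) : MvPolynomial (Fin 3) k :=
  X 0 * (pderiv 0 p * pderiv 2 q - pderiv 2 p * pderiv 0 q) +
    X 1 * (pderiv 1 p * pderiv 2 q - pderiv 2 p * pderiv 1 q)

noncomputable def linInvBracket {k : Type*} [Field k] (n : ℕ)
    (p q : MvPolynomial (Fin 3) k) : MvPolynomial (Fin 3) k :=
  C (n : k) * X 0 * (pderiv 0 p * pderiv 2 q - pderiv 2 p * pderiv 0 q) +
    X 1 * (pderiv 1 p * pderiv 2 q - pderiv 2 p * pderiv 1 q)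

section Aux
variable {k : Type*} [Field k]

lemma pd_point_deriv (b : Fin 3 → k) (ℓ : MvPolynomial (Fin 3) k → k)
    (hadd : ∀ p q, ℓ (p + q) = ℓ p + ℓ q)
    (hC : ∀ r : k, ℓ (C r) = 0)
    (hmul : ∀ p q, ℓ (p * q) = aeval b p * ℓ q + aeval b q * ℓ p) :
    ∀ p, ℓ p = ∑ i, ℓ (X i) * aeval b (pderiv i p) := by
  intro p
  induction p using MvPolynomial.induction_on with
  | C r => simp [hC]
  | add p q hp hq => simp [hadd, hp, hq, mul_add, Finset.sum_add_distrib]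
  | mul_X p j hp =>
    rw [hmul, hp]
    fin_cases j <;>
      simp [Fin.sum_univ_three, pderiv_mul, pderiv_X_self, pderiv_X_of_ne] <;> ring

lemma lb_X0X2 : linBracket (X 0 : MvPolynomial (Fin 3) k) (X 2) = X 0 := by
  simp [linBracket, pderiv_X_self, pderiv_X_of_ne, Fin.ext_iff]

lemma lb_X1X2 : linBracket (X 1 : MvPolynomial (Fin 3) k) (X 2) = X 1 := by
  simp [linBracket, pderiv_X_self, pderiv_X_of_ne, Fin.ext_iff]

lemma aeval0_linInv (n : ℕ) (p q : MvPolynomial (Fin 3) k) :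
    aeval (fun _ : Fin 3 => (0:k)) (linInvBracket n p q) = 0 := by
  simp [linInvBracket]

lemma dq_linInv (n : ℕ) (j : Fin 3) (p q : MvPolynomial (Fin 3) k) :
    aeval (fun _ : Fin 3 => (0:k)) (pderiv j (linInvBracket n p q)) =
      (if j = 0 then (n : k) *
        (aeval (fun _ : Fin 3 => (0:k)) (pderiv 0 p) * aeval (fun _ : Fin 3 => (0:k)) (pderiv 2 q)
          - aeval (fun _ : Fin 3 => (0:k)) (pderiv 2 p) * aeval (fun _ : Fin 3 => (0:k)) (pderiv 0 q)) else 0)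
      + (if j = 1 then
        (aeval (fun _ : Fin 3 => (0:k)) (pderiv 1 p) * aeval (fun _ : Fin 3 => (0:k)) (pderiv 2 q)
          - aeval (fun _ : Fin 3 => (0:k)) (pderiv 2 p) * aeval (fun _ : Fin 3 => (0:k)) (pderiv 1 q)) else 0) := by
  fin_cases j <;>
    simp [linInvBracket, pderiv_mul, pderiv_X_self, pderiv_X_of_ne, Fin.ext_iff] <;> ring

end Aux

/-- The invariant ring `P^T` of the linear Taft action is not isomorphic to `P`
as a Poisson algebra, for `n ≥ 2`. -/
theorem lin_inv_not_poisson_iso {k : Type*} [Field k] [CharZero k]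
    (n : ℕ) (hn : 2 ≤ n) :
    ¬ ∃ ψ : MvPolynomial (Fin 3) k ≃ₐ[k] MvPolynomial (Fin 3) k,
      ∀ p q : MvPolynomial (Fin 3) k,
        ψ (linBracket p q) = linInvBracket n (ψ p) (ψ q) := by
  rintro ⟨ψ, hψ⟩
  set ev0 : MvPolynomial (Fin 3) k →ₐ[k] k := aeval (fun _ : Fin 3 => (0:k)) with hev0
  -- ψ(X 0) and ψ(X 1) vanish at the origin
  have hb0 : ψ (X 0) = linInvBracket n (ψ (X 0)) (ψ (X 2)) := by
    have := hψ (X 0) (X 2); rwa [lb_X0X2] at this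
  have hb1 : ψ (X 1) = linInvBracket n (ψ (X 1)) (ψ (X 2)) := by
    have := hψ (X 1) (X 2); rwa [lb_X1X2] at this
  have h0 : ev0 (ψ (X 0)) = 0 := by rw [hb0]; exact aeval0_linInv n _ _
  have h1 : ev0 (ψ (X 1)) = 0 := by rw [hb1]; exact aeval0_linInv n _ _
  set c : k := ev0 (ψ (X 2)) with hc
  set a : Fin 3 → k := ![0, 0, c] with ha
  -- the composed evaluation is evaluation at a
  have hcomp : ∀ p, ev0 (ψ p) = aeval a p := by
    have : ev0.comp (ψ : MvPolynomial (Fin 3) k →ₐ[k] MvPolynomial (Fin 3) k) = aeval a := by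
      apply MvPolynomial.algHom_ext
      intro i
      fin_cases i <;> simp [h0, h1, ha, ← hc]
    intro p
    exact DFunLike.congr_fun this p
  have hcomp' : ∀ q, aeval a (ψ.symm q) = ev0 q := by
    intro q
    have := hcomp (ψ.symm q)
    rw [ψ.apply_symm_apply] at this
    exact this.symm
  -- Jacobian matrices
  set J : Fin 3 → Fin 3 → k := fun j i => ev0 (pderiv j (ψ (X i))) with hJ
  set K : Fin 3 → Fin 3 → k := fun i j => aeval a (pderiv i (ψ.symm (X j))) with hK
  -- chain rule for ψ.symm, giving K * J = 1
  have hKJ : ∀ i m : Fin 3, ∑ j, K i j * J j m = if i = m then 1 else 0 := by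
    intro i m
    have hchain := pd_point_deriv (fun _ : Fin 3 => (0:k))
      (fun q => aeval a (pderiv i (ψ.symm q)))
      (by intro p q; simp)
      (by intro r
          have hcr : ψ.symm (C r) = C r := by
            simpa [MvPolynomial.algebraMap_eq] using ψ.symm.commutes r
          simp [hcr])
      (by intro p q; simp only [map_mul, pderiv_mul, map_add, hcomp', hev0]; ring)
      (ψ (X m))
    have hsm : ψ.symm (ψ (X m)) = X m := ψ.symm_apply_apply _
    rw [hsm] at hchain
    rw [← hchain]
    fin_cases i <;> fin_cases m <;>
      simp [pderiv_X_self, pderiv_X_of_ne, Fin.ext_iff, ha]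
  -- six derivative relations from the Poisson condition
  have mk : ∀ (j : Fin 3) (p : MvPolynomial (Fin 3) k),
      ψ p = linInvBracket n (ψ p) (ψ (X 2)) →
      ev0 (pderiv j (ψ p)) =
        (if j = 0 then (n : k) * (ev0 (pderiv 0 (ψ p)) * ev0 (pderiv 2 (ψ (X 2)))
            - ev0 (pderiv 2 (ψ p)) * ev0 (pderiv 0 (ψ (X 2)))) else 0)
        + (if j = 1 then (ev0 (pderiv 1 (ψ p)) * ev0 (pderiv 2 (ψ (X 2)))
            - ev0 (pderiv 2 (ψ p)) * ev0 (pderiv 1 (ψ (X 2)))) else 0) := by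
    intro j p hp
    have h := dq_linInv n j (ψ p) (ψ (X 2))
    rw [← hp] at h
    exact h
  have e00 : J 0 0 = (n:k) * (J 0 0 * J 2 2 - J 2 0 * J 0 2) := by
    simpa using mk 0 (X 0) hb0
  have e10 : J 1 0 = J 1 0 * J 2 2 - J 2 0 * J 1 2 := by
    simpa using mk 1 (X 0) hb0
  have e20 : J 2 0 = 0 := by simpa using mk 2 (X 0) hb0
  have e01 : J 0 1 = (n:k) * (J 0 1 * J 2 2 - J 2 1 * J 0 2) := by
    simpa using mk 0 (X 1) hb1
  have e11 : J 1 1 = J 1 1 * J 2 2 - J 2 1 * J 1 2 := by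
    simpa using mk 1 (X 1) hb1
  have e21 : J 2 1 = 0 := by simpa using mk 2 (X 1) hb1
  have kj00 : K 0 0 * J 0 0 + K 0 1 * J 1 0 + K 0 2 * J 2 0 = 1 := by
    simpa [Fin.sum_univ_three] using hKJ 0 0
  have kj01 : K 0 0 * J 0 1 + K 0 1 * J 1 1 + K 0 2 * J 2 1 = 0 := by
    simpa [Fin.sum_univ_three] using hKJ 0 1
  have kj10 : K 1 0 * J 0 0 + K 1 1 * J 1 0 + K 1 2 * J 2 0 = 0 := by
    simpa [Fin.sum_univ_three] using hKJ 1 0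
  have kj11 : K 1 0 * J 0 1 + K 1 1 * J 1 1 + K 1 2 * J 2 1 = 1 := by
    simpa [Fin.sum_univ_three] using hKJ 1 1
  have hn1 : (n:k) ≠ 1 := by
    intro h
    have : n = 1 := by exact_mod_cast h
    omega
  have f00 : J 0 0 * (1 - (n:k) * J 2 2) = 0 := by
    linear_combination e00 - (n:k) * J 0 2 * e20
  have f01 : J 0 1 * (1 - (n:k) * J 2 2) = 0 := by
    linear_combination e01 - (n:k) * J 0 2 * e21
  have f10 : J 1 0 * (1 - J 2 2) = 0 := by
    linear_combination e10 - J 1 2 * e20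
  have f11 : J 1 1 * (1 - J 2 2) = 0 := by
    linear_combination e11 - J 1 2 * e21
  by_cases ht : J 2 2 = 1
  · have hnt : 1 - (n:k) * J 2 2 ≠ 0 := by
      rw [ht, mul_one]
      intro h
      exact hn1 ((sub_eq_zero.mp h).symm)
    have h00 : J 0 0 = 0 := (mul_eq_zero.mp f00).resolve_right hnt
    have h01 : J 0 1 = 0 := (mul_eq_zero.mp f01).resolve_right hnt
    have hK01 : K 0 1 * J 1 0 = 1 := by
      linear_combination kj00 - K 0 0 * h00 - K 0 2 * e20
    have hJ11' : K 0 1 * J 1 1 = 0 := by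
      linear_combination kj01 - K 0 0 * h01 - K 0 2 * e21
    have hK01ne : K 0 1 ≠ 0 := left_ne_zero_of_mul_eq_one hK01
    have h11 : J 1 1 = 0 := (mul_eq_zero.mp hJ11').resolve_left hK01ne
    have : (0:k) = 1 := by
      linear_combination kj11 - K 1 0 * h01 - K 1 1 * h11 - K 1 2 * e21
    exact zero_ne_one this
  · have htne : 1 - J 2 2 ≠ 0 := fun h => ht (sub_eq_zero.mp h).symm
    have h10 : J 1 0 = 0 := (mul_eq_zero.mp f10).resolve_right htne
    have h11 : J 1 1 = 0 := (mul_eq_zero.mp f11).resolve_right htne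
    have hK00 : K 0 0 * J 0 0 = 1 := by
      linear_combination kj00 - K 0 1 * h10 - K 0 2 * e20
    have hJ00ne : J 0 0 ≠ 0 := right_ne_zero_of_mul_eq_one hK00
    have hK10J : K 1 0 * J 0 0 = 0 := by
      linear_combination kj10 - K 1 1 * h10 - K 1 2 * e20
    have hK10 : K 1 0 = 0 := (mul_eq_zero.mp hK10J).resolve_right hJ00ne
    have : (0:k) = 1 := by
      linear_combination kj11 - J 0 1 * hK10 - K 1 1 * h11 - K 1 2 * e21
    exact zero_ne_one this
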